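/- Let f be analytic in the region bounded by the Bernstein ellipse E_ρ = {z = (ρe^{iθ} + ρ^{-1}e^{-iθ})/2 : θ ∈ [0,2π)} for some ρ > 1, with |f(z)| ≤ M on E_ρ. Then the degree-n Chebyshev truncation p_n of f satisfies max_{x∈[−1,1]} |p_n(x) − f(x)| ≤ 2M ρ^{−n}/(ρ − 1). -/

import Mathlib

open MeasureTheory

/-- The Bernstein ellipse `E_ρ = {(ρe^{iθ} + ρ^{−1}e^{−iθ})/2 : θ}` in the complex plane. -/
def bernsteinEllipse (ρ : ℝ) : Set ℂ :=
  {z | ∃ θ : ℝ, z = ((ρ : ℂ) * Complex.exp ((θ : ℂ) * Complex.I) +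
    (ρ : ℂ)⁻¹ * Complex.exp (-((θ : ℂ) * Complex.I))) / 2}

/-- The closed region bounded by the Bernstein ellipse `E_ρ`. -/
def bernsteinRegion (ρ : ℝ) : Set ℂ :=
  {z | ∃ r θ : ℝ, r ∈ Set.Icc 1 ρ ∧ z = ((r : ℂ) * Complex.exp ((θ : ℂ) * Complex.I) +
    (r : ℂ)⁻¹ * Complex.exp (-((θ : ℂ) * Complex.I))) / 2}

/-!
The Joukowski map `J w = (w + w⁻¹)/2` sends `e^{iθ}` to `cos θ`, the circle `|w| = ρ` onto `E_ρ`
and the annulus `1 ≤ |w| ≤ ρ` into the region it bounds. Since `T_k (cos θ) = cos (kθ)`, the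
Chebyshev coefficient `a_j` (`j ≥ 1`) is `1/(πi)` times the contour integral of
`f (J w) w^{-j-1}` over the unit circle. Cauchy's theorem on the annulus moves the contour to
`|w| = ρ`, which gives `|a_j| ≤ 2 M ρ^{-j}`; as `|T_j| ≤ 1` on `[-1, 1]`, the truncation error is
at most the geometric tail `Σ_{j > n} 2 M ρ^{-j} = 2 M ρ^{-n} / (ρ - 1)`.
-/

open Complex Metric Set Filter intervalIntegral

noncomputable def joukowski (w : ℂ) : ℂ := (w + w⁻¹) / 2

-- Also true at `w = 0`, where both sides vanish because `0⁻¹ = 0`.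
lemma joukowski_eq_polar (w : ℂ) :
    joukowski w = ((‖w‖ : ℂ) * exp (arg w * I) + (‖w‖ : ℂ)⁻¹ * exp (-(arg w * I))) / 2 := by
  rw [exp_neg, ← mul_inv, norm_mul_exp_arg_mul_I, joukowski]

lemma joukowski_mem_bernsteinRegion {ρ : ℝ} {w : ℂ} (h1 : 1 ≤ ‖w‖) (hρ : ‖w‖ ≤ ρ) :
    joukowski w ∈ bernsteinRegion ρ :=
  ⟨‖w‖, arg w, ⟨h1, hρ⟩, joukowski_eq_polar w⟩

lemma joukowski_mem_bernsteinEllipse {ρ : ℝ} {w : ℂ} (hw : ‖w‖ = ρ) :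
    joukowski w ∈ bernsteinEllipse ρ :=
  ⟨arg w, hw ▸ joukowski_eq_polar w⟩

lemma mapsTo_joukowski_annulus (ρ : ℝ) :
    MapsTo joukowski (closedBall 0 ρ \ ball 0 1) (bernsteinRegion ρ) := fun w ⟨hρ, h1⟩ => by
  simp only [mem_closedBall, mem_ball, dist_zero_right, not_lt] at hρ h1
  exact joukowski_mem_bernsteinRegion h1 hρ

lemma differentiableAt_joukowski {w : ℂ} (hw : w ≠ 0) : DifferentiableAt ℂ joukowski w :=
  (differentiableAt_id.add (differentiableAt_inv hw)).div_const 2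

lemma joukowski_exp_mul_I (θ : ℝ) : joukowski (exp (θ * I)) = Real.cos θ := by
  rw [joukowski, ← exp_neg, ofReal_cos, cos, neg_mul]

lemma integral_exp_int_mul_mul_I (m : ℤ) :
    ∫ θ in (0 : ℝ)..2 * Real.pi, exp (m * θ * I) = if m = 0 then 2 * Real.pi else 0 := by
  split_ifs with hm
  · simp [hm]
  · have hc : (m : ℂ) * I ≠ 0 := by simp [hm]
    simp_rw [mul_right_comm _ _ I]
    have h2π : (m : ℂ) * I * ↑(2 * Real.pi) = m * (2 * Real.pi * I) := by push_cast; ring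
    rw [integral_exp_mul_complex hc, h2π, exp_int_mul_two_pi_mul_I]
    simp

lemma integral_cos_mul_exp_neg {j : ℕ} (hj : j ≠ 0) (k : ℕ) :
    ∫ θ in (0 : ℝ)..2 * Real.pi, (Real.cos (k * θ) : ℂ) * exp (-(j * θ * I)) =
      if k = j then (Real.pi : ℂ) else 0 := by
  have hsplit : ∀ θ : ℝ, (Real.cos (k * θ) : ℂ) * exp (-(j * θ * I)) =
      (exp (((k - j : ℤ) : ℂ) * θ * I) + exp (((-k - j : ℤ) : ℂ) * θ * I)) / 2 := by
    intro θ
    rw [ofReal_cos, cos, add_div, add_mul, div_mul_eq_mul_div, div_mul_eq_mul_div,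
      ← exp_add, ← exp_add]
    push_cast
    ring_nf
  simp_rw [hsplit]
  rw [intervalIntegral.integral_div, integral_add (Continuous.intervalIntegrable (by fun_prop) _ _)
    (Continuous.intervalIntegrable (by fun_prop) _ _), integral_exp_int_mul_mul_I,
    integral_exp_int_mul_mul_I]
  split_ifs <;> first | omega | (push_cast; ring)

lemma integral_mul_exp_neg_eq_of_hasSum_cos {a : ℕ → ℝ} (ha : Summable a) {F : ℝ → ℂ}
    (hF : ∀ θ, HasSum (fun k => ((a k * Real.cos (k * θ) : ℝ) : ℂ)) (F θ)) {j : ℕ} (hj : j ≠ 0) :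
    ∫ θ in (0 : ℝ)..2 * Real.pi, F θ * exp (-(j * θ * I)) = Real.pi * a j := by
  have hterm : HasSum (fun k => ∫ θ in (0 : ℝ)..2 * Real.pi,
      ((a k * Real.cos (k * θ) : ℝ) : ℂ) * exp (-(j * θ * I)))
      (∫ θ in (0 : ℝ)..2 * Real.pi, F θ * exp (-(j * θ * I))) := by
    refine hasSum_integral_of_dominated_convergence (fun k _ => |a k|)
      (fun k => Continuous.aestronglyMeasurable (by fun_prop)) (fun k => ?_)
      (ae_of_all _ fun _ _ => ha.abs) intervalIntegrable_const
      (ae_of_all _ fun θ _ => (hF θ).mul_right _)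
    refine ae_of_all _ fun θ _ => ?_
    rw [norm_mul, show ‖exp (-(j * θ * I))‖ = 1 by simp [norm_exp], mul_one, norm_real,
      Real.norm_eq_abs, abs_mul]
    exact mul_le_of_le_one_right (abs_nonneg _) (Real.abs_cos_le_one _)
  have hortho : ∀ k, ∫ θ in (0 : ℝ)..2 * Real.pi,
      ((a k * Real.cos (k * θ) : ℝ) : ℂ) * exp (-(j * θ * I)) =
      if k = j then (Real.pi * a j : ℂ) else 0 := by
    intro k
    simp_rw [ofReal_mul, mul_assoc (a k : ℂ), intervalIntegral.integral_const_mul,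
      integral_cos_mul_exp_neg hj k]
    split_ifs with hk <;> simp [hk, mul_comm]
  simp_rw [hortho] at hterm
  exact hterm.unique (hasSum_ite_eq j _)

lemma circleIntegral_unit_mul_zpow (h : ℂ → ℂ) (j : ℕ) :
    (∮ z in C(0, 1), h z * z ^ (-(j : ℤ) - 1)) =
      I * ∫ θ in (0 : ℝ)..2 * Real.pi, h (exp (θ * I)) * exp (-(j * θ * I)) := by
  rw [circleIntegral, ← intervalIntegral.integral_const_mul]
  refine integral_congr fun θ _ => ?_
  have hpow : exp (θ * I) * exp (θ * I) ^ (-(j : ℤ) - 1) = exp (-(j * θ * I)) := by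
    rw [← exp_int_mul, ← exp_add]
    push_cast
    ring_nf
  simp only [deriv_circleMap, circleMap_zero, ofReal_one, one_mul, smul_eq_mul]
  linear_combination I * h (exp (θ * I)) * hpow

lemma circleIntegral_eq_of_differentiableOn_annulus {E : Type*} [NormedAddCommGroup E]
    [NormedSpace ℂ E] [CompleteSpace E] {c : ℂ} {r R : ℝ} (h0 : 0 < r) (hle : r ≤ R) {g : ℂ → E}
    (hg : DifferentiableOn ℂ g (closedBall c R \ ball c r)) :
    (∮ z in C(c, R), g z) = ∮ z in C(c, r), g z := by
  refine circleIntegral_eq_of_differentiable_on_annulus_off_countable h0 hle countable_empty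
    hg.continuousOn fun z ⟨hz, _⟩ => hg.differentiableAt ?_
  exact mem_of_superset ((isOpen_ball.sdiff isClosed_closedBall).mem_nhds hz)
    (sdiff_subset_sdiff ball_subset_closedBall ball_subset_closedBall)

open Polynomial.Chebyshev in
lemma abs_chebyshev_coeff_le {ρ M : ℝ} (hρ : 1 < ρ) {f : ℂ → ℂ} {a : ℕ → ℝ}
    (hf : DifferentiableOn ℂ f (bernsteinRegion ρ))
    (hM : ∀ z ∈ bernsteinEllipse ρ, ‖f z‖ ≤ M)
    (hexp : ∀ x ∈ Icc (-1 : ℝ) 1,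
      HasSum (fun j : ℕ => ((a j * (T ℝ (j : ℤ)).eval x : ℝ) : ℂ)) (f x))
    {j : ℕ} (hj : j ≠ 0) :
    |a j| ≤ 2 * M * ρ⁻¹ ^ j := by
  have hρ0 : 0 < ρ := one_pos.trans hρ
  set g : ℂ → ℂ := fun z => f (joukowski z) * z ^ (-(j : ℤ) - 1)
  have ha : Summable a := by
    simpa only [T_eval_one, mul_one, summable_ofReal] using
      (hexp 1 ⟨by norm_num, le_rfl⟩).summable
  have hcos : ∀ θ : ℝ,
      HasSum (fun k => ((a k * Real.cos (k * θ) : ℝ) : ℂ)) (f (joukowski (exp (θ * I)))) := by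
    intro θ
    simpa only [joukowski_exp_mul_I, T_real_cos, Int.cast_natCast] using
      hexp _ ⟨Real.neg_one_le_cos θ, Real.cos_le_one θ⟩
  have hunit : (∮ z in C(0, 1), g z) = I * (Real.pi * a j) := by
    rw [circleIntegral_unit_mul_zpow, integral_mul_exp_neg_eq_of_hasSum_cos ha hcos hj]
  have hg : DifferentiableOn ℂ g (closedBall 0 ρ \ ball 0 1) := by
    intro z hz
    have hz0 : z ≠ 0 := fun h => hz.2 (h ▸ mem_ball_self one_pos)
    exact ((hf _ (mapsTo_joukowski_annulus ρ hz)).comp z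
      (differentiableAt_joukowski hz0).differentiableWithinAt (mapsTo_joukowski_annulus ρ)).mul
      ((differentiableAt_zpow.mpr (Or.inl hz0)).differentiableWithinAt)
  have hbound : ‖∮ z in C(0, ρ), g z‖ ≤ 2 * Real.pi * ρ * (M * ρ ^ (-(j : ℤ) - 1)) := by
    refine circleIntegral.norm_integral_le_of_norm_le_const hρ0.le fun z hz => ?_
    rw [mem_sphere_zero_iff_norm] at hz
    rw [norm_mul, norm_zpow, hz]
    exact mul_le_mul_of_nonneg_right (hM _ (joukowski_mem_bernsteinEllipse hz)) (by positivity)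
  rw [circleIntegral_eq_of_differentiableOn_annulus one_pos hρ.le hg, hunit, norm_mul, norm_I,
    one_mul, ← ofReal_mul, norm_real, Real.norm_eq_abs, abs_mul, abs_of_pos Real.pi_pos] at hbound
  have hpow : ρ * ρ ^ (-(j : ℤ) - 1) = ρ⁻¹ ^ j := by
    rw [zpow_sub₀ hρ0.ne', zpow_neg, zpow_natCast, zpow_one, inv_pow]
    field_simp
  refine le_of_mul_le_mul_left (hbound.trans_eq ?_) Real.pi_pos
  rw [← hpow]
  ring

lemma norm_sum_range_succ_sub_le_of_geometric {E : Type*} [SeminormedAddCommGroup E]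
    {t : ℕ → E} {s : E} (hs : HasSum t s) {C r : ℝ} (hr : r < 1)
    (ht : ∀ k, ‖t (k + 1)‖ ≤ C * r ^ (k + 1)) (n : ℕ) :
    ‖∑ k ∈ Finset.range (n + 1), t k - s‖ ≤ C * r ^ (n + 1) / (1 - r) := by
  have hu : ∀ m, dist (∑ k ∈ Finset.range (m + 1), t k) (∑ k ∈ Finset.range (m + 2), t k) ≤
      (C * r) * r ^ m := by
    intro m
    rw [dist_comm, dist_eq_norm, Finset.sum_range_succ _ (m + 1), add_sub_cancel_left, mul_assoc,
      ← pow_succ']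
    exact ht m
  have hlim := hs.tendsto_sum_nat.comp (tendsto_add_atTop_nat 1)
  have := dist_le_of_le_geometric_of_tendsto r (C * r) hr hu hlim n
  rwa [dist_eq_norm, mul_assoc, ← pow_succ'] at this

/-- If `f` is analytic in the region bounded by the Bernstein ellipse `E_ρ` (for `ρ > 1`),
bounded by `M` on `E_ρ`, and has Chebyshev expansion `f(x) = Σ_{j} a_j T_j(x)` on `[−1,1]`,
then the degree-`n` Chebyshev truncation satisfies
`max_{x∈[−1,1]} |p_n(x) − f(x)| ≤ 2M ρ^{−n}/(ρ − 1)`. -/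
theorem chebyshev_truncation_bound (ρ M : ℝ) (hρ : 1 < ρ) (f : ℂ → ℂ) (a : ℕ → ℝ)
    (hf : DifferentiableOn ℂ f (bernsteinRegion ρ))
    (hM : ∀ z ∈ bernsteinEllipse ρ, ‖f z‖ ≤ M)
    (hexp : ∀ x ∈ Set.Icc (-1 : ℝ) 1,
      HasSum (fun j : ℕ => ((a j * (Polynomial.Chebyshev.T ℝ (j : ℤ)).eval x : ℝ) : ℂ)) (f x))
    (n : ℕ) :
    ∀ x ∈ Set.Icc (-1 : ℝ) 1,
      ‖((∑ j ∈ Finset.range (n + 1),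
          a j * (Polynomial.Chebyshev.T ℝ (j : ℤ)).eval x : ℝ) : ℂ) - f x‖ ≤
        2 * M * ρ ^ (-(n : ℤ)) / (ρ - 1) := by
  intro x hx
  have hterm : ∀ k : ℕ,
      ‖((a (k + 1) * (Polynomial.Chebyshev.T ℝ ((k + 1 : ℕ) : ℤ)).eval x : ℝ) : ℂ)‖ ≤
        2 * M * ρ⁻¹ ^ (k + 1) := by
    intro k
    rw [norm_real, Real.norm_eq_abs, abs_mul]
    exact (mul_le_of_le_one_right (abs_nonneg _)
      (Polynomial.Chebyshev.abs_eval_T_real_le_one _ (abs_le.mpr hx))).trans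
      (abs_chebyshev_coeff_le hρ hf hM hexp k.succ_ne_zero)
  rw [ofReal_sum]
  refine (norm_sum_range_succ_sub_le_of_geometric (hexp x hx) (inv_lt_one_of_one_lt₀ hρ)
    hterm n).trans_eq ?_
  rw [zpow_neg, zpow_natCast, inv_pow, pow_succ]
  field_simp
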